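/- Let p > 1. For all δ ≥ 0, all d ≥ 1 and every real d×d matrix P one has the exact identity S(P):P = |F(P)|², and there exist constants c, C > 0 depending only on p such that c·φ(|P^sym|) ≤ S(P):P ≤ C·φ(|P^sym|), where φ(t) = ∫₀^t (δ+s)^{p−2}·s ds. -/

import Mathlib

open Matrix

/-- Symmetric part `P^sym = (P + Pᵀ)/2` of a square matrix. -/
noncomputable def msym {d : ℕ} (P : Matrix (Fin d) (Fin d) ℝ) : Matrix (Fin d) (Fin d) ℝ :=
  (2⁻¹ : ℝ) • (P + Pᵀ)

/-- Frobenius inner product `A:B = ∑ᵢⱼ Aᵢⱼ Bᵢⱼ`. -/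
noncomputable def mdot {d : ℕ} (A B : Matrix (Fin d) (Fin d) ℝ) : ℝ :=
  ∑ i, ∑ j, A i j * B i j

/-- Frobenius norm `|A| = (A:A)^(1/2)`. -/
noncomputable def mnorm {d : ℕ} (A : Matrix (Fin d) (Fin d) ℝ) : ℝ :=
  Real.sqrt (mdot A A)

/-- Stress tensor `S(P) = (δ + |P^sym|)^(p-2) • P^sym` (real power, `0^r = 0` for `r < 0`). -/
noncomputable def Smap (p δ : ℝ) {d : ℕ} (P : Matrix (Fin d) (Fin d) ℝ) :
    Matrix (Fin d) (Fin d) ℝ :=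
  ((δ + mnorm (msym P)) ^ (p - 2)) • msym P

/-- Associated function `F(P) = (δ + |P^sym|)^((p-2)/2) • P^sym`. -/
noncomputable def Fmap (p δ : ℝ) {d : ℕ} (P : Matrix (Fin d) (Fin d) ℝ) :
    Matrix (Fin d) (Fin d) ℝ :=
  ((δ + mnorm (msym P)) ^ ((p - 2) / 2)) • msym P

/-!
Since `P^sym : P = |P^sym|²`, both `S(P):P` and `|F(P)|²` equal `(δ + t)^(p-2) t²` with
`t = |P^sym|`, so the two-sided bound concerns one real variable. Substituting `s = t u` gives
`φ(t) = t² ∫₀¹ (δ + t u)^(p-2) u du`, and `u (δ + t) ≤ δ + t u ≤ δ + t` squeezes the integrand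
between `(δ + t)^(p-2) u` and `(δ + t)^(p-2) u^(p-1)`, in an order depending on the sign of
`p - 2`. Their integrals are `(δ + t)^(p-2) / 2` and `(δ + t)^(p-2) / p`, which gives the
constants `c = min p 2` and `C = max p 2`.
-/

open intervalIntegral MeasureTheory Set

section Frobenius

variable {d : ℕ}

lemma mdot_smul_left (r : ℝ) (A B : Matrix (Fin d) (Fin d) ℝ) :
    mdot (r • A) B = r * mdot A B := by
  simp only [mdot, Matrix.smul_apply, smul_eq_mul, Finset.mul_sum, mul_assoc]

lemma mdot_smul_right (r : ℝ) (A B : Matrix (Fin d) (Fin d) ℝ) :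
    mdot A (r • B) = r * mdot A B := by
  simp only [mdot, Matrix.smul_apply, smul_eq_mul, Finset.mul_sum, mul_left_comm]

lemma mdot_add_right (A B C : Matrix (Fin d) (Fin d) ℝ) :
    mdot A (B + C) = mdot A B + mdot A C := by
  simp only [mdot, Matrix.add_apply, mul_add, Finset.sum_add_distrib]

lemma mdot_transpose_right (A B : Matrix (Fin d) (Fin d) ℝ) : mdot A Bᵀ = mdot Aᵀ B := by
  simp only [mdot, transpose_apply]
  exact Finset.sum_comm

lemma mnorm_sq (A : Matrix (Fin d) (Fin d) ℝ) : mnorm A ^ 2 = mdot A A :=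
  Real.sq_sqrt (Finset.sum_nonneg fun _ _ => Finset.sum_nonneg fun _ _ => mul_self_nonneg _)

lemma mnorm_nonneg (A : Matrix (Fin d) (Fin d) ℝ) : 0 ≤ mnorm A := Real.sqrt_nonneg _

lemma transpose_msym (P : Matrix (Fin d) (Fin d) ℝ) : (msym P)ᵀ = msym P := by
  rw [msym, transpose_smul, transpose_add, transpose_transpose, add_comm]

lemma mdot_msym_left (P : Matrix (Fin d) (Fin d) ℝ) : mdot (msym P) P = mnorm (msym P) ^ 2 := by
  rw [mnorm_sq]
  change _ = mdot (msym P) ((2⁻¹ : ℝ) • (P + Pᵀ))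
  rw [mdot_smul_right, mdot_add_right, mdot_transpose_right, transpose_msym]
  ring

end Frobenius

section Stress

variable {p δ : ℝ} {d : ℕ} (P : Matrix (Fin d) (Fin d) ℝ)

lemma mdot_Smap_self :
    mdot (Smap p δ P) P = (δ + mnorm (msym P)) ^ (p - 2) * mnorm (msym P) ^ 2 := by
  rw [Smap, mdot_smul_left, mdot_msym_left]

lemma mnorm_Fmap_sq (hδ : 0 ≤ δ) :
    mnorm (Fmap p δ P) ^ 2 = (δ + mnorm (msym P)) ^ (p - 2) * mnorm (msym P) ^ 2 := by
  have hx : 0 ≤ δ + mnorm (msym P) := add_nonneg hδ (mnorm_nonneg _)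
  have hsq : ((δ + mnorm (msym P)) ^ ((p - 2) / 2)) ^ 2 = (δ + mnorm (msym P)) ^ (p - 2) := by
    rw [← Real.rpow_natCast, ← Real.rpow_mul hx]
    norm_num
  rw [mnorm_sq, Fmap, mdot_smul_left, mdot_smul_right, ← mnorm_sq, ← hsq]
  ring

end Stress

section Rescaling

variable {p δ t u : ℝ}

lemma rpow_sub_two_mul_rpow_sub_one (hp : p ≠ 1) {x : ℝ} (hx : 0 ≤ x) (hu : 0 ≤ u) :
    x ^ (p - 2) * u ^ (p - 1) = (u * x) ^ (p - 2) * u := by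
  rw [Real.mul_rpow hu hx, show p - 1 = p - 2 + 1 by ring,
    Real.rpow_add' hu (by contrapose! hp; linarith), Real.rpow_one]
  ring

lemma rescaled_integrand_bounds_of_two_le (hp : 2 ≤ p) (hδ : 0 ≤ δ) (ht : 0 ≤ t)
    (hu₀ : 0 ≤ u) (hu₁ : u ≤ 1) :
    (δ + t) ^ (p - 2) * u ^ (p - 1) ≤ (δ + t * u) ^ (p - 2) * u ∧
      (δ + t * u) ^ (p - 2) * u ≤ (δ + t) ^ (p - 2) * u := by
  rw [rpow_sub_two_mul_rpow_sub_one (by linarith) (by linarith) hu₀]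
  constructor
  · gcongr
    nlinarith
  · gcongr
    nlinarith

lemma rescaled_integrand_bounds_of_le_two (hp : p ≤ 2) (hp₁ : p ≠ 1) (hδ : 0 ≤ δ)
    (ht : 0 < t) (hu₀ : 0 < u) (hu₁ : u ≤ 1) :
    (δ + t) ^ (p - 2) * u ≤ (δ + t * u) ^ (p - 2) * u ∧
      (δ + t * u) ^ (p - 2) * u ≤ (δ + t) ^ (p - 2) * u ^ (p - 1) := by
  rw [rpow_sub_two_mul_rpow_sub_one hp₁ (by linarith) hu₀.le]
  constructor
  · exact mul_le_mul_of_nonneg_right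
      (Real.rpow_le_rpow_of_nonpos (by positivity) (by nlinarith) (by linarith)) hu₀.le
  · exact mul_le_mul_of_nonneg_right
      (Real.rpow_le_rpow_of_nonpos (by positivity) (by nlinarith) (by linarith)) hu₀.le

lemma intervalIntegrable_rescaled_integrand (hp : 1 < p) (hδ : 0 ≤ δ) (ht : 0 < t) :
    IntervalIntegrable (fun u => (δ + t * u) ^ (p - 2) * u) volume 0 1 := by
  -- For `δ = 0` and `p < 2` the factor `(t u)^(p-2)` blows up at `u = 0`, so continuity of the
  -- composite is not available there; dominate the integrand instead.
  refine IntervalIntegrable.mono_fun'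
    (g := fun u => (δ + t) ^ (p - 2) * (u + u ^ (p - 1)))
    ((intervalIntegrable_id.add
      (intervalIntegral.intervalIntegrable_rpow' (by linarith))).const_mul _)
    (by fun_prop) ?_
  rw [uIoc_of_le zero_le_one]
  filter_upwards [ae_restrict_mem measurableSet_Ioc] with u ⟨hu₀, hu₁⟩
  have hu' : 0 ≤ u ^ (p - 1) := Real.rpow_nonneg hu₀.le _
  have hx : 0 ≤ (δ + t) ^ (p - 2) := Real.rpow_nonneg (by linarith) _
  rw [Real.norm_eq_abs, abs_of_nonneg (by positivity)]
  rcases le_total 2 p with hp₂ | hp₂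
  · nlinarith [(rescaled_integrand_bounds_of_two_le hp₂ hδ ht.le hu₀.le hu₁).2]
  · nlinarith [(rescaled_integrand_bounds_of_le_two hp₂ hp.ne' hδ ht hu₀ hu₁).2]

lemma integral_zero_one_rpow_sub_one (hp : 0 < p) : ∫ u in (0:ℝ)..1, u ^ (p - 1) = 1 / p := by
  rw [integral_rpow (Or.inl (by linarith)), sub_add_cancel, Real.one_rpow,
    Real.zero_rpow hp.ne', sub_zero]

lemma integral_rescaled_integrand_bounds (hp : 1 < p) (hδ : 0 ≤ δ) (ht : 0 < t) :
    min p 2 * ∫ u in (0:ℝ)..1, (δ + t * u) ^ (p - 2) * u ≤ (δ + t) ^ (p - 2) ∧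
      (δ + t) ^ (p - 2) ≤ max p 2 * ∫ u in (0:ℝ)..1, (δ + t * u) ^ (p - 2) * u := by
  set x := (δ + t) ^ (p - 2)
  have hf := intervalIntegrable_rescaled_integrand hp hδ ht
  have hlin : IntervalIntegrable (fun u : ℝ => x * u) volume 0 1 :=
    intervalIntegrable_id.const_mul x
  have hpow : IntervalIntegrable (fun u : ℝ => x * u ^ (p - 1)) volume 0 1 :=
    (intervalIntegral.intervalIntegrable_rpow' (by linarith)).const_mul x
  have hlin_eq : ∫ u in (0:ℝ)..1, x * u = x / 2 := by
    rw [intervalIntegral.integral_const_mul, integral_id]; ring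
  have hpow_eq : ∫ u in (0:ℝ)..1, x * u ^ (p - 1) = x / p := by
    rw [intervalIntegral.integral_const_mul, integral_zero_one_rpow_sub_one (by linarith)]; ring
  rcases le_total 2 p with hp₂ | hp₂
  · have lower := integral_mono_on_of_le_Ioo zero_le_one hpow hf fun u hu =>
      (rescaled_integrand_bounds_of_two_le hp₂ hδ ht.le hu.1.le hu.2.le).1
    have upper := integral_mono_on_of_le_Ioo zero_le_one hf hlin fun u hu =>
      (rescaled_integrand_bounds_of_two_le hp₂ hδ ht.le hu.1.le hu.2.le).2
    rw [min_eq_right hp₂, max_eq_left hp₂]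
    rw [hpow_eq, div_le_iff₀ (by linarith)] at lower
    rw [hlin_eq] at upper
    constructor <;> linarith
  · have lower := integral_mono_on_of_le_Ioo zero_le_one hlin hf fun u hu =>
      (rescaled_integrand_bounds_of_le_two hp₂ hp.ne' hδ ht hu.1 hu.2.le).1
    have upper := integral_mono_on_of_le_Ioo zero_le_one hf hpow fun u hu =>
      (rescaled_integrand_bounds_of_le_two hp₂ hp.ne' hδ ht hu.1 hu.2.le).2
    rw [min_eq_left hp₂, max_eq_right hp₂]
    rw [hpow_eq, le_div_iff₀ (by linarith)] at upper
    rw [hlin_eq] at lower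
    constructor <;> linarith

lemma integral_eq_sq_mul_integral_rescaled (δ p t : ℝ) :
    ∫ s in (0:ℝ)..t, (δ + s) ^ (p - 2) * s
      = t ^ 2 * ∫ u in (0:ℝ)..1, (δ + t * u) ^ (p - 2) * u := by
  rcases eq_or_ne t 0 with rfl | ht
  · simp
  have := intervalIntegral.integral_comp_mul_left (fun s => (δ + s) ^ (p - 2) * s) ht
    (a := 0) (b := 1)
  have hpull : ∫ u in (0:ℝ)..1, (δ + t * u) ^ (p - 2) * (t * u)
      = t * ∫ u in (0:ℝ)..1, (δ + t * u) ^ (p - 2) * u := by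
    rw [← intervalIntegral.integral_const_mul]
    congr 1 with u
    ring
  simp only [mul_zero, mul_one, smul_eq_mul, hpull] at this
  rw [← mul_inv_cancel_left₀ ht (∫ s in (0:ℝ)..t, (δ + s) ^ (p - 2) * s), ← this]
  ring

end Rescaling

lemma integral_rpow_mul_bounds {p δ t : ℝ} (hp : 1 < p) (hδ : 0 ≤ δ) (ht : 0 ≤ t) :
    min p 2 * (∫ s in (0:ℝ)..t, (δ + s) ^ (p - 2) * s) ≤ (δ + t) ^ (p - 2) * t ^ 2 ∧
      (δ + t) ^ (p - 2) * t ^ 2 ≤ max p 2 * ∫ s in (0:ℝ)..t, (δ + s) ^ (p - 2) * s := by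
  rcases ht.eq_or_lt with rfl | ht
  · simp
  obtain ⟨lower, upper⟩ := integral_rescaled_integrand_bounds hp hδ ht
  rw [integral_eq_sq_mul_integral_rescaled]
  constructor
  · nlinarith [mul_le_mul_of_nonneg_right lower (sq_nonneg t)]
  · nlinarith [mul_le_mul_of_nonneg_right upper (sq_nonneg t)]

/-- For `p > 1`: for all `δ ≥ 0`, `d ≥ 1` and all real `d×d` matrices `P` one has the exact
identity `S(P):P = |F(P)|²`, and there are constants `c, C > 0` depending only on `p` with
`c * φ(|P^sym|) ≤ S(P):P ≤ C * φ(|P^sym|)`, where `φ(t) = ∫₀ᵗ (δ+s)^(p-2) * s ds`. -/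
theorem stmt9 (p : ℝ) (hp : 1 < p) :
    (∀ δ : ℝ, 0 ≤ δ → ∀ d : ℕ, 1 ≤ d → ∀ P : Matrix (Fin d) (Fin d) ℝ,
      mdot (Smap p δ P) P = mnorm (Fmap p δ P) ^ 2) ∧
    ∃ c : ℝ, 0 < c ∧ ∃ C : ℝ, 0 < C ∧
      ∀ δ : ℝ, 0 ≤ δ → ∀ d : ℕ, 1 ≤ d → ∀ P : Matrix (Fin d) (Fin d) ℝ,
        c * (∫ s in (0:ℝ)..(mnorm (msym P)), (δ + s) ^ (p - 2) * s)
            ≤ mdot (Smap p δ P) P ∧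
        mdot (Smap p δ P) P
            ≤ C * ∫ s in (0:ℝ)..(mnorm (msym P)), (δ + s) ^ (p - 2) * s := by
  refine ⟨fun δ hδ _ _ P => by rw [mdot_Smap_self, mnorm_Fmap_sq P hδ],
    min p 2, lt_min (by linarith) two_pos, max p 2, lt_max_of_lt_right two_pos,
    fun δ hδ _ _ P => ?_⟩
  rw [mdot_Smap_self]
  exact integral_rpow_mul_bounds hp hδ (mnorm_nonneg _)
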